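/- arXiv:2512.20465 — 2 statements merged into one kernel-verified Lean document; each statement's English description precedes it below -/
import Mathlib

section
/- Let ψ: A⊗C → C⊗A be a bijective k-linear map satisfying the distributive laws (C1) and (C2). Then the inverse ψ^{-1}: C⊗A → A⊗C satisfies the corresponding distributive laws, so m^{ψ^{-1}} := (m_A⊗m_C)∘(id_A⊗ψ^{-1}⊗id_C) is an associative product on A⊗C, and ψ: (A⊗C, m^{ψ^{-1}}) → (C⊗A, m^ψ) is an algebra isomorphism, i.e. ψ((a⊗c)·^{ψ^{-1}}(a'⊗c')) = ψ(a⊗c)·^ψ ψ(a'⊗c') for all a,a'∈A, c,c'∈C. -/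
open TensorProduct LinearMap Function

noncomputable section
namespace Paper

variable (k : Type*) [Field k]
section Twist
variable (A : Type*) [Ring A] [Algebra k A] (C : Type*) [Ring C] [Algebra k C]

/-- The twisted multiplication `m^ψ := (m_C ⊗ m_A) ∘ (id_C ⊗ ψ ⊗ id_A)` as a linear map
`(C ⊗ A) ⊗ (C ⊗ A) → C ⊗ A`. -/
def tmulMap (ψ : A ⊗[k] C →ₗ[k] C ⊗[k] A) :
    (C ⊗[k] A) ⊗[k] (C ⊗[k] A) →ₗ[k] C ⊗[k] A :=
  TensorProduct.map (LinearMap.mul' k C) (LinearMap.mul' k A)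
    ∘ₗ (TensorProduct.assoc k (C ⊗[k] C) A A).toLinearMap
    ∘ₗ TensorProduct.map (TensorProduct.assoc k C C A).symm.toLinearMap LinearMap.id
    ∘ₗ TensorProduct.map (LinearMap.lTensor C ψ) LinearMap.id
    ∘ₗ TensorProduct.map (TensorProduct.assoc k C A C).toLinearMap LinearMap.id
    ∘ₗ (TensorProduct.assoc k (C ⊗[k] A) C A).symm.toLinearMap

/-- The twisted product of two elements of `C ⊗ A`. -/
def tmul (ψ : A ⊗[k] C →ₗ[k] C ⊗[k] A) (x y : C ⊗[k] A) : C ⊗[k] A :=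
  tmulMap k A C ψ (x ⊗ₜ y)

/-- `ψ` is a twisting map when the product `m^ψ` is associative. -/
def IsTwistingMap (ψ : A ⊗[k] C →ₗ[k] C ⊗[k] A) : Prop :=
  ∀ x y z : C ⊗[k] A,
    tmul k A C ψ (tmul k A C ψ x y) z = tmul k A C ψ x (tmul k A C ψ y z)

/-- `ψ (a ⊗ 1_C) = 1_C ⊗ a`. -/
def LeftNormal (ψ : A ⊗[k] C →ₗ[k] C ⊗[k] A) : Prop :=
  ∀ a : A, ψ (a ⊗ₜ (1 : C)) = (1 : C) ⊗ₜ a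

/-- `ψ (1_A ⊗ c) = c ⊗ 1_A`. -/
def RightNormal (ψ : A ⊗[k] C →ₗ[k] C ⊗[k] A) : Prop :=
  ∀ c : C, ψ ((1 : A) ⊗ₜ c) = c ⊗ₜ (1 : A)

/-- Distributive law (C1): `ψ ∘ (m_A ⊗ id_C) = (id_C ⊗ m_A) ∘ (ψ ⊗ id_A) ∘ (id_A ⊗ ψ)`. -/
def DistLawC1 (ψ : A ⊗[k] C →ₗ[k] C ⊗[k] A) : Prop :=
  ψ ∘ₗ rTensor C (LinearMap.mul' k A)
    = lTensor C (LinearMap.mul' k A)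
        ∘ₗ (TensorProduct.assoc k C A A).toLinearMap
        ∘ₗ rTensor A ψ
        ∘ₗ (TensorProduct.assoc k A C A).symm.toLinearMap
        ∘ₗ lTensor A ψ
        ∘ₗ (TensorProduct.assoc k A A C).toLinearMap

/-- Distributive law (C2): `ψ ∘ (id_A ⊗ m_C) = (m_C ⊗ id_A) ∘ (id_C ⊗ ψ) ∘ (ψ ⊗ id_C)`. -/
def DistLawC2 (ψ : A ⊗[k] C →ₗ[k] C ⊗[k] A) : Prop :=
  ψ ∘ₗ lTensor A (LinearMap.mul' k C)
    = rTensor A (LinearMap.mul' k C)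
        ∘ₗ (TensorProduct.assoc k C C A).symm.toLinearMap
        ∘ₗ lTensor C ψ
        ∘ₗ (TensorProduct.assoc k C A C).toLinearMap
        ∘ₗ rTensor C ψ
        ∘ₗ (TensorProduct.assoc k A C C).symm.toLinearMap

/-- The left-hand side of the associativity condition (Oeq):
`(id_C ⊗ m_A) ∘ (ψ ⊗ id_A) ∘ (id_A ⊗ m_C ⊗ id_A) ∘ (id_A ⊗ id_C ⊗ ψ)`. -/
def OeqLHS (ψ : A ⊗[k] C →ₗ[k] C ⊗[k] A) :
    (A ⊗[k] C) ⊗[k] (A ⊗[k] C) →ₗ[k] C ⊗[k] A :=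
  lTensor C (LinearMap.mul' k A)
    ∘ₗ (TensorProduct.assoc k C A A).toLinearMap
    ∘ₗ rTensor A ψ
    ∘ₗ TensorProduct.map (lTensor A (LinearMap.mul' k C)) LinearMap.id
    ∘ₗ TensorProduct.map (TensorProduct.assoc k A C C).toLinearMap LinearMap.id
    ∘ₗ (TensorProduct.assoc k (A ⊗[k] C) C A).symm.toLinearMap
    ∘ₗ lTensor (A ⊗[k] C) ψ

/-- The right-hand side of the associativity condition (Oeq):
`(m_C ⊗ id_A) ∘ (id_C ⊗ ψ) ∘ (id_C ⊗ m_A ⊗ id_C) ∘ (ψ ⊗ id_A ⊗ id_C)`. -/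
def OeqRHS (ψ : A ⊗[k] C →ₗ[k] C ⊗[k] A) :
    (A ⊗[k] C) ⊗[k] (A ⊗[k] C) →ₗ[k] C ⊗[k] A :=
  rTensor A (LinearMap.mul' k C)
    ∘ₗ (TensorProduct.assoc k C C A).symm.toLinearMap
    ∘ₗ lTensor C ψ
    ∘ₗ (TensorProduct.assoc k C A C).toLinearMap
    ∘ₗ TensorProduct.map (lTensor C (LinearMap.mul' k A)) LinearMap.id
    ∘ₗ TensorProduct.map (TensorProduct.assoc k C A A).toLinearMap LinearMap.id
    ∘ₗ (TensorProduct.assoc k (C ⊗[k] A) A C).symm.toLinearMap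
    ∘ₗ rTensor (A ⊗[k] C) ψ

/-- The set of relations `c ⊗ (b·a) - (c·F(b)) ⊗ a` defining the push-forward `C ⊗_B A`. -/
def relSet (B : Subalgebra k A) (F : B →ₐ[k] C) : Set (C ⊗[k] A) :=
  {x | ∃ (c : C) (b : B) (a : A), x = c ⊗ₜ ((b : A) * a) - (c * F b) ⊗ₜ a}

/-- The subspace spanned by the relations defining the push-forward `C ⊗_B A`. -/
def relSpan (B : Subalgebra k A) (F : B →ₐ[k] C) : Submodule k (C ⊗[k] A) :=
  Submodule.span k (relSet k A C B F)

end Twist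
section Star
variable [StarRing k] [TrivialStar k]
variable (X : Type*) [Ring X] [Algebra k X] [StarRing X] [StarModule k X]
variable (Y : Type*) [Ring Y] [Algebra k Y] [StarRing Y] [StarModule k Y]

/-- The map `(∗_Y ⊗ ∗_X) ∘ flip : X ⊗ Y → Y ⊗ X`, `x ⊗ y ↦ y* ⊗ x*`. -/
def starFlip : X ⊗[k] Y →ₗ[k] Y ⊗[k] X :=
  TensorProduct.lift (LinearMap.mk₂ k (fun x y => (star y : Y) ⊗ₜ[k] (star x : X))
    (fun x x' y => by simp [star_add, TensorProduct.tmul_add])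
    (fun r x y => by simp [star_smul, star_trivial, TensorProduct.tmul_smul])
    (fun x y y' => by simp [star_add, TensorProduct.add_tmul])
    (fun r x y => by simp [star_smul, star_trivial, TensorProduct.smul_tmul']))

@[simp] lemma starFlip_tmul (x : X) (y : Y) :
    starFlip k X Y (x ⊗ₜ y) = (star y : Y) ⊗ₜ (star x : X) := rfl

end Star
section Flat
variable (R : Type*) [Ring R] (M : Type*) [AddCommGroup M] [Module R M]

/-- Flatness of a left module over a (possibly noncommutative) ring, via the equational
criterion: every linear relation among elements of `M` is a consequence of linear relations
holding in `R`. -/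
def IsFlatLeft : Prop :=
  ∀ (n : ℕ) (r : Fin n → R) (x : Fin n → M), (∑ i, r i • x i) = 0 →
    ∃ (m : ℕ) (a : Fin n → Fin m → R) (y : Fin m → M),
      (∀ i, x i = ∑ j, a i j • y j) ∧ ∀ j, (∑ i, r i * a i j) = 0

/-- Faithful flatness of a left module over a (possibly noncommutative) ring: flatness
together with `I·M ≠ M` for every maximal right ideal `I` of `R`. -/
def IsFaithfullyFlatLeft : Prop :=
  IsFlatLeft R M ∧ ∀ I : Submodule Rᵐᵒᵖ R, IsCoatom I →
    AddSubgroup.closure {z : M | ∃ i ∈ I, ∃ v : M, z = i • v} ≠ ⊤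

end Flat
section Hopf
variable (A : Type*) [Ring A] [Algebra k A] (C : Type*) [Ring C] [Algebra k C]
variable (H : Type*) [Ring H] [HopfAlgebra k H]

/-- `δ : A → A ⊗ H` makes `A` a right `H`-comodule algebra: `δ` is an algebra map (built in)
which is coassociative and counital. -/
def IsComodAlg (δ : A →ₐ[k] A ⊗[k] H) : Prop :=
  ((TensorProduct.assoc k A H H).toLinearMap ∘ₗ rTensor H δ.toLinearMap ∘ₗ δ.toLinearMap
      = lTensor A (Coalgebra.comul (R := k) (A := H)) ∘ₗ δ.toLinearMap)
    ∧ ((TensorProduct.rid k A).toLinearMap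
        ∘ₗ lTensor A (Coalgebra.counit (R := k) (A := H)) ∘ₗ δ.toLinearMap
      = LinearMap.id)

/-- The subalgebra `A^{co H}` of coinvariant elements of a comodule algebra. -/
def coinv (δ : A →ₐ[k] A ⊗[k] H) : Subalgebra k A where
  carrier := {a | δ a = a ⊗ₜ[k] (1 : H)}
  mul_mem' := by
    intro a b ha hb
    simp only [Set.mem_setOf_eq] at *
    rw [map_mul, ha, hb, Algebra.TensorProduct.tmul_mul_tmul, one_mul]
  one_mem' := by
    simp only [Set.mem_setOf_eq, map_one, Algebra.TensorProduct.one_def]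
  add_mem' := by
    intro a b ha hb
    simp only [Set.mem_setOf_eq] at *
    rw [map_add, ha, hb, TensorProduct.add_tmul]
  algebraMap_mem' := by
    intro r
    simp only [Set.mem_setOf_eq, AlgHom.commutes, Algebra.TensorProduct.algebraMap_apply]

/-- The canonical map `A ⊗ A → A ⊗ H`, `a ⊗ a' ↦ a a'₍₀₎ ⊗ a'₍₁₎` (before taking the
quotient `A ⊗_B A`). -/
def chi0 (δ : A →ₐ[k] A ⊗[k] H) : A ⊗[k] A →ₗ[k] A ⊗[k] H :=
  rTensor H (LinearMap.mul' k A)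
    ∘ₗ (TensorProduct.assoc k A A H).symm.toLinearMap
    ∘ₗ lTensor A δ.toLinearMap

/-- The coaction `id_C ⊗ δ` on `C ⊗ A` (with `C` a trivial comodule), as a map
`C ⊗ A → (C ⊗ A) ⊗ H`. -/
def coactT (δ : A →ₐ[k] A ⊗[k] H) : C ⊗[k] A →ₗ[k] (C ⊗[k] A) ⊗[k] H :=
  (TensorProduct.assoc k C A H).symm.toLinearMap ∘ₗ lTensor C δ.toLinearMap

/-- `ψ : A ⊗ C → C ⊗ A` is a morphism of right `H`-comodules:
`(id_C ⊗ δ) ∘ ψ = (ψ ⊗ id_H) ∘ (id_A ⊗ flip) ∘ (δ ⊗ id_C)`. -/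
def IsComodMor (δ : A →ₐ[k] A ⊗[k] H) (ψ : A ⊗[k] C →ₗ[k] C ⊗[k] A) : Prop :=
  lTensor C δ.toLinearMap ∘ₗ ψ
    = (TensorProduct.assoc k C A H).toLinearMap
        ∘ₗ rTensor H ψ
        ∘ₗ (TensorProduct.assoc k A C H).symm.toLinearMap
        ∘ₗ lTensor A (TensorProduct.comm k H C).toLinearMap
        ∘ₗ (TensorProduct.assoc k A H C).toLinearMap
        ∘ₗ rTensor C δ.toLinearMap

variable {k H} in
/-- Given a multiplication `m` on `P`, the induced multiplication on `P ⊗ H`. -/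
def tmulH {P : Type*} [AddCommGroup P] [Module k P] (m : P →ₗ[k] P →ₗ[k] P) :
    P ⊗[k] H →ₗ[k] P ⊗[k] H →ₗ[k] P ⊗[k] H :=
  TensorProduct.map₂ m (LinearMap.mul k H)

variable {k H} in
/-- The canonical Galois map `P ⊗ P → P ⊗ H`, `x ⊗ y ↦ (x ·_m y₍₀₎) ⊗ y₍₁₎`, for a
multiplication `m` and a coaction `db` on `P`. -/
def chiP {P : Type*} [AddCommGroup P] [Module k P]
    (m : P →ₗ[k] P →ₗ[k] P) (db : P →ₗ[k] P ⊗[k] H) : P ⊗[k] P →ₗ[k] P ⊗[k] H :=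
  rTensor H (TensorProduct.lift m)
    ∘ₗ (TensorProduct.assoc k P P H).symm.toLinearMap
    ∘ₗ lTensor P db

variable {k C} in
/-- The span of the relations `(x ·_m e c) ⊗ y - x ⊗ (e c ·_m y)` defining the balanced tensor
product `P ⊗_C P` over the image of `C` in `P`. -/
def balSpan {P : Type*} [AddCommGroup P] [Module k P]
    (m : P →ₗ[k] P →ₗ[k] P) (e : C → P) : Submodule k (P ⊗[k] P) :=
  Submodule.span k {z | ∃ (x y : P) (c : C), z = (m x (e c)) ⊗ₜ y - x ⊗ₜ (m (e c) y)}

variable {k H} in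
/-- Coassociativity of a coaction `db : P → P ⊗ H`. -/
def Coassoc {P : Type*} [AddCommGroup P] [Module k P] (db : P →ₗ[k] P ⊗[k] H) : Prop :=
  (TensorProduct.assoc k P H H).toLinearMap ∘ₗ rTensor H db ∘ₗ db
    = lTensor P (Coalgebra.comul (R := k) (A := H)) ∘ₗ db

variable {k H} in
/-- Counitality of a coaction `db : P → P ⊗ H`. -/
def Counital {P : Type*} [AddCommGroup P] [Module k P] (db : P →ₗ[k] P ⊗[k] H) : Prop :=
  (TensorProduct.rid k P).toLinearMap
      ∘ₗ lTensor P (Coalgebra.counit (R := k) (A := H)) ∘ₗ db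
    = LinearMap.id

variable {k H} in
/-- Convolution product of two linear maps `H → P`, with respect to a multiplication `m`
on `P`. -/
def convP {P : Type*} [AddCommGroup P] [Module k P]
    (m : P →ₗ[k] P →ₗ[k] P) (f g : H →ₗ[k] P) : H →ₗ[k] P :=
  TensorProduct.lift m ∘ₗ TensorProduct.map f g ∘ₗ Coalgebra.comul (R := k) (A := H)

variable {k H} in
/-- The unit for convolution: `h ↦ ε(h) • u`. -/
def convUnit {P : Type*} [AddCommGroup P] [Module k P] (u : P) : H →ₗ[k] P :=
  (Coalgebra.counit (R := k) (A := H)).smulRight u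

end Hopf

section HopfPush
variable (A : Type*) [Ring A] [Algebra k A] (C : Type*) [Ring C] [Algebra k C]
variable (H : Type*) [Ring H] [HopfAlgebra k H]
section PushForward
variable (δ : A →ₐ[k] A ⊗[k] H) (F : coinv k A H δ →ₐ[k] C)

/-- The subspace of `C ⊗ A` defining the push-forward `C ⊗_B A`, `B = A^{co H}`. -/
def pushSpan : Submodule k (C ⊗[k] A) := relSpan k A C (coinv k A H δ) F

/-- The quotient map `C ⊗ A → C ⊗_B A`. -/
def pushQ : C ⊗[k] A →ₗ[k] (C ⊗[k] A) ⧸ pushSpan k A C H δ F :=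
  (pushSpan k A C H δ F).mkQ

/-- `\barψ = π_B ∘ ψ` is a `B`-bimodule morphism. -/
def BarBimod (ψ : A ⊗[k] C →ₗ[k] C ⊗[k] A) : Prop :=
  (∀ (b : coinv k A H δ) (a : A) (c : C),
      pushQ k A C H δ F (ψ (((b : A) * a) ⊗ₜ c))
        = pushQ k A C H δ F (rTensor A (LinearMap.mulLeft k (F b)) (ψ (a ⊗ₜ c))))
  ∧ (∀ (b : coinv k A H δ) (a : A) (c : C),
      pushQ k A C H δ F (ψ (a ⊗ₜ (c * F b)))
        = pushQ k A C H δ F (lTensor C (LinearMap.mulRight k (b : A)) (ψ (a ⊗ₜ c))))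

/-- `\barψ (1_A ⊗ c) = c ⊗_B 1_A` and `\barψ (a ⊗ 1_C) = 1_C ⊗_B a`. -/
def BarNormal (ψ : A ⊗[k] C →ₗ[k] C ⊗[k] A) : Prop :=
  (∀ c : C, pushQ k A C H δ F (ψ ((1 : A) ⊗ₜ c)) = pushQ k A C H δ F (c ⊗ₜ (1 : A)))
  ∧ (∀ a : A, pushQ k A C H δ F (ψ (a ⊗ₜ (1 : C))) = pushQ k A C H δ F ((1 : C) ⊗ₜ a))

/-- `σ` is the canonical left `C`-action on the push-forward `C ⊗_B A`:
`σ c (c' ⊗_B a) = (c c') ⊗_B a`. -/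
def SigmaSpec (σ : C →ₗ[k] ((C ⊗[k] A) ⧸ pushSpan k A C H δ F)
    →ₗ[k] ((C ⊗[k] A) ⧸ pushSpan k A C H δ F)) : Prop :=
  ∀ (c : C) (x : C ⊗[k] A),
    σ c (pushQ k A C H δ F x) = pushQ k A C H δ F (rTensor A (LinearMap.mulLeft k c) x)

/-- The distributive law `\barψ (a ⊗ c c') = c^ψ · \barψ (a^ψ ⊗ c')`, where `·` denotes the
left `C`-action `σ` on the push-forward. -/
def BarDistrib (ψ : A ⊗[k] C →ₗ[k] C ⊗[k] A)
    (σ : C →ₗ[k] ((C ⊗[k] A) ⧸ pushSpan k A C H δ F)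
      →ₗ[k] ((C ⊗[k] A) ⧸ pushSpan k A C H δ F)) : Prop :=
  (pushQ k A C H δ F ∘ₗ ψ) ∘ₗ lTensor A (LinearMap.mul' k C)
    = TensorProduct.lift σ
        ∘ₗ lTensor C (pushQ k A C H δ F ∘ₗ ψ)
        ∘ₗ (TensorProduct.assoc k C A C).toLinearMap
        ∘ₗ rTensor C ψ
        ∘ₗ (TensorProduct.assoc k A C C).symm.toLinearMap

/-- The embedding `C → C ⊗_B A`, `c ↦ c ⊗_B 1_A`. -/
def eC : C → (C ⊗[k] A) ⧸ pushSpan k A C H δ F :=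
  fun c => pushQ k A C H δ F (c ⊗ₜ (1 : A))

end PushForward

section Galois
variable (δ : A →ₐ[k] A ⊗[k] H)

/-- The subspace of `A ⊗ A` defining the balanced tensor product `A ⊗_B A`, `B = A^{co H}`. -/
def galSpan : Submodule k (A ⊗[k] A) :=
  relSpan k A A (coinv k A H δ) (coinv k A H δ).val

/-- The quotient map `A ⊗ A → A ⊗_B A`. -/
def galQ : A ⊗[k] A →ₗ[k] (A ⊗[k] A) ⧸ galSpan k A H δ := (galSpan k A H δ).mkQ

/-- The translation map `τ = χ⁻¹(1_A ⊗ -) : H → A ⊗_B A` obtained from a bijective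
canonical map `χ`. -/
def transMap (χ : ((A ⊗[k] A) ⧸ galSpan k A H δ) ≃ₗ[k] A ⊗[k] H) :
    H →ₗ[k] (A ⊗[k] A) ⧸ galSpan k A H δ :=
  χ.symm.toLinearMap ∘ₗ TensorProduct.mk k A H 1

end Galois
end HopfPush
end Paper

set_option synthInstance.maxHeartbeats 1000000
set_option maxHeartbeats 4000000

section Aux
open Paper
variable {k : Type*} [Field k] {A : Type*} [Ring A] [Algebra k A]
  {C : Type*} [Ring C] [Algebra k C]

lemma tmul_tmul' (ψ : A ⊗[k] C →ₗ[k] C ⊗[k] A) (c c' : C) (a a' : A) :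
    tmul k A C ψ (c ⊗ₜ a) (c' ⊗ₜ a')
      = TensorProduct.map (LinearMap.mulLeft k c) (LinearMap.mulRight k a') (ψ (a ⊗ₜ c')) := by
  simp only [Paper.tmul, tmulMap, coe_comp, LinearMap.comp_apply, LinearEquiv.coe_coe,
    assoc_symm_tmul, TensorProduct.map_tmul, assoc_tmul, lTensor_tmul, id_coe, id_eq]
  induction ψ (a ⊗ₜ c') using TensorProduct.induction_on with
  | zero => simp
  | tmul u v => simp [mul'_apply]
  | add x y hx hy => simp only [TensorProduct.tmul_add, TensorProduct.add_tmul, map_add, hx, hy]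

lemma tmul_add_left (ψ : A ⊗[k] C →ₗ[k] C ⊗[k] A) (x x' y : C ⊗[k] A) :
    tmul k A C ψ (x + x') y = tmul k A C ψ x y + tmul k A C ψ x' y := by
  simp [Paper.tmul, TensorProduct.add_tmul]

lemma tmul_add_right (ψ : A ⊗[k] C →ₗ[k] C ⊗[k] A) (x y y' : C ⊗[k] A) :
    tmul k A C ψ x (y + y') = tmul k A C ψ x y + tmul k A C ψ x y' := by
  simp [Paper.tmul, TensorProduct.tmul_add]

lemma tmul_zero_left (ψ : A ⊗[k] C →ₗ[k] C ⊗[k] A) (y : C ⊗[k] A) :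
    tmul k A C ψ 0 y = 0 := by simp [Paper.tmul, TensorProduct.zero_tmul]

lemma tmul_zero_right (ψ : A ⊗[k] C →ₗ[k] C ⊗[k] A) (x : C ⊗[k] A) :
    tmul k A C ψ x 0 = 0 := by simp [Paper.tmul, TensorProduct.tmul_zero]

/-- `P ψ (a ⊗ (u ⊗ v)) = ψ(a ⊗ u) · (1 ⊗ v)` -/
def Pmap (ψ : A ⊗[k] C →ₗ[k] C ⊗[k] A) : A ⊗[k] (C ⊗[k] A) →ₗ[k] C ⊗[k] A :=
  lTensor C (LinearMap.mul' k A)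
    ∘ₗ (TensorProduct.assoc k C A A).toLinearMap
    ∘ₗ rTensor A ψ
    ∘ₗ (TensorProduct.assoc k A C A).symm.toLinearMap

/-- `Q ψ ((u ⊗ v) ⊗ c) = (u ⊗ 1) · ψ(v ⊗ c)` -/
def Qmap (ψ : A ⊗[k] C →ₗ[k] C ⊗[k] A) : (C ⊗[k] A) ⊗[k] C →ₗ[k] C ⊗[k] A :=
  rTensor A (LinearMap.mul' k C)
    ∘ₗ (TensorProduct.assoc k C C A).symm.toLinearMap
    ∘ₗ lTensor C ψ
    ∘ₗ (TensorProduct.assoc k C A C).toLinearMap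

lemma c1' {ψ : A ⊗[k] C →ₗ[k] C ⊗[k] A} (h1 : DistLawC1 k A C ψ) (a a' : A) (c : C) :
    ψ ((a * a') ⊗ₜ c) = Pmap ψ (a ⊗ₜ ψ (a' ⊗ₜ c)) := by
  have := LinearMap.congr_fun h1 ((a ⊗ₜ a') ⊗ₜ c)
  simpa only [coe_comp, LinearMap.comp_apply, rTensor_tmul, lTensor_tmul, mul'_apply,
    LinearEquiv.coe_coe, assoc_tmul, Pmap] using this

lemma c2' {ψ : A ⊗[k] C →ₗ[k] C ⊗[k] A} (h2 : DistLawC2 k A C ψ) (a : A) (c c' : C) :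
    ψ (a ⊗ₜ (c * c')) = Qmap ψ (ψ (a ⊗ₜ c) ⊗ₜ c') := by
  have := LinearMap.congr_fun h2 (a ⊗ₜ (c ⊗ₜ c'))
  simpa only [coe_comp, LinearMap.comp_apply, rTensor_tmul, lTensor_tmul, mul'_apply,
    LinearEquiv.coe_coe, assoc_symm_tmul, Qmap] using this

lemma Pp (ψ : A ⊗[k] C →ₗ[k] C ⊗[k] A) (a : A) (c : C) (a' : A) :
    Pmap ψ (a ⊗ₜ (c ⊗ₜ a')) = lTensor C (LinearMap.mulRight k a') (ψ (a ⊗ₜ c)) := by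
  simp only [Pmap, coe_comp, LinearMap.comp_apply, LinearEquiv.coe_coe, assoc_symm_tmul,
    rTensor_tmul]
  induction ψ (a ⊗ₜ c) using TensorProduct.induction_on with
  | zero => simp
  | tmul u v => simp [mul'_apply]
  | add x y hx hy => simp only [TensorProduct.add_tmul, map_add, hx, hy]

lemma Qp (ψ : A ⊗[k] C →ₗ[k] C ⊗[k] A) (c : C) (a : A) (c' : C) :
    Qmap ψ ((c ⊗ₜ a) ⊗ₜ c') = rTensor A (LinearMap.mulLeft k c) (ψ (a ⊗ₜ c')) := by
  simp only [Qmap, coe_comp, LinearMap.comp_apply, LinearEquiv.coe_coe, assoc_tmul,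
    lTensor_tmul]
  induction ψ (a ⊗ₜ c') using TensorProduct.induction_on with
  | zero => simp
  | tmul u v => simp [mul'_apply]
  | add x y hx hy => simp only [TensorProduct.tmul_add, map_add, hx, hy]

end Aux

section Aux2
open Paper
variable {k : Type*} [Field k] {A : Type*} [Ring A] [Algebra k A]
  {C : Type*} [Ring C] [Algebra k C]

lemma assocL {ψ : A ⊗[k] C →ₗ[k] C ⊗[k] A} (h1 : DistLawC1 k A C ψ)
    (c c' c'' : C) (a a' a'' : A) :
    tmul k A C ψ (tmul k A C ψ (c ⊗ₜ a) (c' ⊗ₜ a')) (c'' ⊗ₜ a'')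
      = TensorProduct.map (LinearMap.mulLeft k c) (LinearMap.mulRight k a'')
          (tmul k A C ψ (ψ (a ⊗ₜ c')) (ψ (a' ⊗ₜ c''))) := by
  rw [tmul_tmul']
  induction ψ (a ⊗ₜ c') using TensorProduct.induction_on with
  | zero => simp [tmul_zero_left]
  | add x y hx hy => simp only [map_add, tmul_add_left, hx, hy]
  | tmul u v =>
    rw [TensorProduct.map_tmul]
    simp only [mulLeft_apply, mulRight_apply]
    rw [tmul_tmul', c1' h1]
    induction ψ (a' ⊗ₜ c'') using TensorProduct.induction_on with
    | zero => simp [tmul_zero_right]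
    | add x y hx hy => simp only [map_add, TensorProduct.tmul_add, tmul_add_right, hx, hy]
    | tmul p q =>
      rw [Pp, tmul_tmul']
      induction ψ (v ⊗ₜ p) using TensorProduct.induction_on with
      | zero => simp
      | add x y hx hy => simp only [map_add, hx, hy]
      | tmul e f => simp [mul_assoc]

lemma assocR {ψ : A ⊗[k] C →ₗ[k] C ⊗[k] A} (h2 : DistLawC2 k A C ψ)
    (c c' c'' : C) (a a' a'' : A) :
    tmul k A C ψ (c ⊗ₜ a) (tmul k A C ψ (c' ⊗ₜ a') (c'' ⊗ₜ a''))
      = TensorProduct.map (LinearMap.mulLeft k c) (LinearMap.mulRight k a'')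
          (tmul k A C ψ (ψ (a ⊗ₜ c')) (ψ (a' ⊗ₜ c''))) := by
  rw [tmul_tmul' ψ c' c'' a' a'']
  induction ψ (a' ⊗ₜ c'') using TensorProduct.induction_on with
  | zero => simp [tmul_zero_right]
  | add x y hx hy => simp only [map_add, tmul_add_right, hx, hy]
  | tmul p q =>
    rw [TensorProduct.map_tmul]
    simp only [mulLeft_apply, mulRight_apply]
    rw [tmul_tmul', c2' h2]
    induction ψ (a ⊗ₜ c') using TensorProduct.induction_on with
    | zero => simp [tmul_zero_left]
    | add x y hx hy => simp only [map_add, TensorProduct.add_tmul, tmul_add_left, hx, hy]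
    | tmul u v =>
      rw [Qp, tmul_tmul']
      induction ψ (v ⊗ₜ p) using TensorProduct.induction_on with
      | zero => simp
      | add x y hx hy => simp only [map_add, hx, hy]
      | tmul e f => simp [mul_assoc]

lemma isTwistingOf {ψ : A ⊗[k] C →ₗ[k] C ⊗[k] A} (h1 : DistLawC1 k A C ψ)
    (h2 : DistLawC2 k A C ψ) : IsTwistingMap k A C ψ := by
  have key : ∀ (c c' c'' : C) (a a' a'' : A),
      tmul k A C ψ (tmul k A C ψ (c ⊗ₜ a) (c' ⊗ₜ a')) (c'' ⊗ₜ a'')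
        = tmul k A C ψ (c ⊗ₜ a) (tmul k A C ψ (c' ⊗ₜ a') (c'' ⊗ₜ a'')) :=
    fun c c' c'' a a' a'' => (assocL h1 c c' c'' a a' a'').trans
      (assocR h2 c c' c'' a a' a'').symm
  intro x y z
  induction x using TensorProduct.induction_on with
  | zero => simp [tmul_zero_left]
  | add x x' hx hx' => simp only [tmul_add_left, hx, hx']
  | tmul cx ax =>
    induction y using TensorProduct.induction_on with
    | zero => simp [tmul_zero_left, tmul_zero_right]
    | add y y' hy hy' => simp only [tmul_add_left, tmul_add_right, hy, hy']
    | tmul cy ay =>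
      induction z using TensorProduct.induction_on with
      | zero => simp [tmul_zero_right]
      | add z z' hz hz' => simp only [tmul_add_right, hz, hz']
      | tmul cz az => exact key cx cy cz ax ay az

end Aux2

section Aux3
open Paper
variable {k : Type*} [Field k] {A : Type*} [Ring A] [Algebra k A]
  {C : Type*} [Ring C] [Algebra k C]

lemma claim2 {ψ : A ⊗[k] C →ₗ[k] C ⊗[k] A} (h2 : DistLawC2 k A C ψ)
    (u : A ⊗[k] C) (y : C) :
    ψ (lTensor A (LinearMap.mul' k C) ((TensorProduct.assoc k A C C) (u ⊗ₜ y)))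
      = Qmap ψ (ψ u ⊗ₜ y) := by
  induction u using TensorProduct.induction_on with
  | zero => simp
  | add x x' hx hx' => simp only [TensorProduct.add_tmul, map_add, hx, hx']
  | tmul x y' => simp only [assoc_tmul, lTensor_tmul, mul'_apply, c2' h2]

lemma claim2m {ψ : A ⊗[k] C →ₗ[k] C ⊗[k] A} (h1 : DistLawC1 k A C ψ)
    (x : A) (u : A ⊗[k] C) :
    ψ (rTensor C (LinearMap.mul' k A) ((TensorProduct.assoc k A A C).symm (x ⊗ₜ u)))
      = Pmap ψ (x ⊗ₜ ψ u) := by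
  induction u using TensorProduct.induction_on with
  | zero => simp
  | add w w' hw hw' => simp only [TensorProduct.tmul_add, map_add, hw, hw']
  | tmul g d => simp only [assoc_symm_tmul, rTensor_tmul, mul'_apply, c1' h1]

variable (ψe : (A ⊗[k] C) ≃ₗ[k] C ⊗[k] A)

lemma lemG (h2 : DistLawC2 k A C ψe.toLinearMap) (c : C) (w : A ⊗[k] C) :
    ψe (lTensor A (LinearMap.mul' k C) ((TensorProduct.assoc k A C C)
        (rTensor C ψe.symm.toLinearMap ((TensorProduct.assoc k C A C).symm (c ⊗ₜ w)))))
      = rTensor A (LinearMap.mulLeft k c) (ψe w) := by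
  induction w using TensorProduct.induction_on with
  | zero => simp
  | add w w' hw hw' => simp only [TensorProduct.tmul_add, map_add, hw, hw']
  | tmul x y =>
    simp only [assoc_symm_tmul, rTensor_tmul]
    have step := claim2 h2 (ψe.symm.toLinearMap (c ⊗ₜ x)) y
    rw [show ψe.toLinearMap (ψe.symm.toLinearMap (c ⊗ₜ x)) = c ⊗ₜ x from
      ψe.apply_symm_apply _] at step
    exact step.trans (Qp _ c x y)

lemma lemG' (h1 : DistLawC1 k A C ψe.toLinearMap) (a' : A) (w : A ⊗[k] C) :
    ψe (rTensor C (LinearMap.mul' k A) ((TensorProduct.assoc k A A C).symm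
        (lTensor A ψe.symm.toLinearMap ((TensorProduct.assoc k A C A) (w ⊗ₜ a')))))
      = lTensor C (LinearMap.mulRight k a') (ψe w) := by
  induction w using TensorProduct.induction_on with
  | zero => simp
  | add w w' hw hw' => simp only [TensorProduct.add_tmul, map_add, hw, hw']
  | tmul x y =>
    simp only [assoc_tmul, lTensor_tmul]
    have step := claim2m h1 x (ψe.symm.toLinearMap (y ⊗ₜ a'))
    rw [show ψe.toLinearMap (ψe.symm.toLinearMap (y ⊗ₜ a')) = y ⊗ₜ a' from
      ψe.apply_symm_apply _] at step
    exact step.trans (Pp _ x y a')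

lemma distC1_inv (h2 : DistLawC2 k A C ψe.toLinearMap) :
    DistLawC1 k C A ψe.symm.toLinearMap := by
  apply TensorProduct.ext'
  intro z a
  induction z using TensorProduct.induction_on with
  | zero => simp
  | add z z' hz hz' => simp only [TensorProduct.add_tmul, map_add, hz, hz']
  | tmul c c' =>
    apply ψe.injective
    simp only [coe_comp, LinearMap.comp_apply, LinearEquiv.coe_coe, rTensor_tmul,
      mul'_apply, assoc_tmul, lTensor_tmul, ψe.apply_symm_apply]
    rw [lemG ψe h2, ψe.apply_symm_apply, rTensor_tmul, mulLeft_apply]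

lemma distC2_inv (h1 : DistLawC1 k A C ψe.toLinearMap) :
    DistLawC2 k C A ψe.symm.toLinearMap := by
  apply TensorProduct.ext'
  intro c z
  induction z using TensorProduct.induction_on with
  | zero => simp
  | add z z' hz hz' => simp only [TensorProduct.tmul_add, map_add, hz, hz']
  | tmul a a' =>
    apply ψe.injective
    simp only [coe_comp, LinearMap.comp_apply, LinearEquiv.coe_coe, lTensor_tmul,
      mul'_apply, assoc_symm_tmul, rTensor_tmul, ψe.apply_symm_apply]
    rw [lemG' ψe h1, ψe.apply_symm_apply, lTensor_tmul, mulRight_apply]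

lemma isoStep {ψ : A ⊗[k] C →ₗ[k] C ⊗[k] A} (h1 : DistLawC1 k A C ψ)
    (h2 : DistLawC2 k A C ψ) (a : A) (c' : C) (w : A ⊗[k] C) :
    ψ (TensorProduct.map (LinearMap.mulLeft k a) (LinearMap.mulRight k c') w)
      = Pmap ψ (a ⊗ₜ Qmap ψ ((ψ w) ⊗ₜ c')) := by
  induction w using TensorProduct.induction_on with
  | zero => simp
  | add w w' hw hw' => simp only [map_add, TensorProduct.add_tmul, TensorProduct.tmul_add,
      hw, hw']
  | tmul x y =>
    simp only [TensorProduct.map_tmul, mulLeft_apply, mulRight_apply]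
    rw [c1' h1, c2' h2]

lemma finalNF {ψ : A ⊗[k] C →ₗ[k] C ⊗[k] A} (h2 : DistLawC2 k A C ψ)
    (a a' : A) (c c' : C) :
    Pmap ψ (a ⊗ₜ Qmap ψ ((c ⊗ₜ a') ⊗ₜ c'))
      = tmul k A C ψ (ψ (a ⊗ₜ c)) (ψ (a' ⊗ₜ c')) := by
  rw [Qp]
  induction ψ (a' ⊗ₜ c') using TensorProduct.induction_on with
  | zero => simp [tmul_zero_right]
  | add s s' hs hs' => simp only [map_add, TensorProduct.tmul_add, tmul_add_right, hs, hs']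
  | tmul p q =>
    rw [rTensor_tmul, mulLeft_apply, Pp, c2' h2]
    induction ψ (a ⊗ₜ c) using TensorProduct.induction_on with
    | zero => simp [tmul_zero_left]
    | add t t' ht ht' => simp only [map_add, TensorProduct.add_tmul, tmul_add_left, ht, ht']
    | tmul u v =>
      rw [Qp, tmul_tmul']
      induction ψ (v ⊗ₜ p) using TensorProduct.induction_on with
      | zero => simp
      | add r r' hr hr' => simp only [map_add, hr, hr']
      | tmul e f => simp

end Aux3


open Paper in
/-- if a bijective linear map `ψ : A ⊗ C → C ⊗ A` satisfies (C1) and (C2), then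
its inverse satisfies the corresponding distributive laws, `m^{ψ⁻¹}` is associative, and `ψ`
is an algebra isomorphism `(A ⊗ C, m^{ψ⁻¹}) → (C ⊗ A, m^ψ)`. -/
theorem inverse_twistingMap
    (k : Type*) [Field k] (A : Type*) [Ring A] [Algebra k A]
    (C : Type*) [Ring C] [Algebra k C] (ψ : (A ⊗[k] C) ≃ₗ[k] C ⊗[k] A)
    (h1 : DistLawC1 k A C ψ.toLinearMap) (h2 : DistLawC2 k A C ψ.toLinearMap) :
    DistLawC1 k C A ψ.symm.toLinearMap
    ∧ DistLawC2 k C A ψ.symm.toLinearMap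
    ∧ IsTwistingMap k C A ψ.symm.toLinearMap
    ∧ ∀ p q : A ⊗[k] C,
        ψ (tmul k C A ψ.symm.toLinearMap p q)
          = tmul k A C ψ.toLinearMap (ψ p) (ψ q) := by
  have hc1 := distC1_inv ψ h2
  have hc2 := distC2_inv ψ h1
  refine ⟨hc1, hc2, isTwistingOf hc1 hc2, ?_⟩
  intro p q
  induction p using TensorProduct.induction_on with
  | zero => simp [tmul_zero_left]
  | add p p' hp hp' => simp only [tmul_add_left, map_add, hp, hp']
  | tmul a c =>
    induction q using TensorProduct.induction_on with
    | zero => simp [tmul_zero_right]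
    | add q q' hq hq' => simp only [tmul_add_right, map_add, hq, hq']
    | tmul a' c' =>
      rw [tmul_tmul']
      have step := isoStep h1 h2 a c' (ψ.symm.toLinearMap (c ⊗ₜ a'))
      rw [show ψ.toLinearMap (ψ.symm.toLinearMap (c ⊗ₜ a')) = c ⊗ₜ a' from
        ψ.apply_symm_apply _] at step
      exact step.trans (finalNF h2 a a' c c')
end
end

section
/- Let A and C be unital algebras over k, B a subalgebra of A, F: B → C an algebra map, and ψ: A⊗C → C⊗A a twisting map. The multiplication m^ψ of C⊗^ψA descends to a well-defined multiplication on the push-forward C⊗_BA if and only if the map \barψ := π_B∘ψ: A⊗C → C⊗_BA is a B-bimodule morphism, i.e. \barψ(ba⊗c) = F(b)·\barψ(a⊗c) and \barψ(a⊗cF(b)) = \barψ(a⊗c)·b for all a∈A, b∈B, c∈C. -/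
open TensorProduct LinearMap Function

noncomputable section
section Aux
open Paper
variable {k : Type*} [Field k] {A : Type*} [Ring A] [Algebra k A]
  {C : Type*} [Ring C] [Algebra k C]

lemma tmul_tmul_aux (ψ : A ⊗[k] C →ₗ[k] C ⊗[k] A) (c : C) (a : A) (c' : C) (a' : A) :
    tmul k A C ψ (c ⊗ₜ a) (c' ⊗ₜ a')
      = rTensor A (mulLeft k c) (lTensor C (mulRight k a') (ψ (a ⊗ₜ c'))) := by
  have h : ∀ z : C ⊗[k] A,
      TensorProduct.map (LinearMap.mul' k C) (LinearMap.mul' k A)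
        ((TensorProduct.assoc k (C ⊗[k] C) A A)
          ((TensorProduct.map (TensorProduct.assoc k C C A).symm.toLinearMap
              (LinearMap.id (R := k) (M := A))) ((c ⊗ₜ z) ⊗ₜ a')))
        = rTensor A (mulLeft k c) (lTensor C (mulRight k a') z) := by
    intro z
    induction z using TensorProduct.induction_on with
    | zero =>
      rw [TensorProduct.tmul_zero, TensorProduct.zero_tmul, LinearMap.map_zero,
        LinearEquiv.map_zero, LinearMap.map_zero, LinearMap.map_zero, LinearMap.map_zero]
    | tmul x y =>
      simp only [TensorProduct.map_tmul, LinearEquiv.coe_coe,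
        TensorProduct.assoc_symm_tmul, id_coe, id_eq, TensorProduct.assoc_tmul,
        mul'_apply, rTensor_tmul, lTensor_tmul, mulLeft_apply, mulRight_apply]
    | add u v hu hv =>
      rw [TensorProduct.tmul_add, TensorProduct.add_tmul, LinearMap.map_add,
        LinearEquiv.map_add, LinearMap.map_add, LinearMap.map_add, LinearMap.map_add, hu, hv]
  simp only [Paper.tmul, tmulMap, coe_comp, Function.comp_apply, LinearEquiv.coe_coe,
    TensorProduct.assoc_symm_tmul, TensorProduct.map_tmul, TensorProduct.assoc_tmul,
    lTensor_tmul, id_coe, id_eq]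
  exact h _

lemma LR_mem {B : Subalgebra k A} {F : B →ₐ[k] C} (c : C) (a' : A)
    {x : C ⊗[k] A} (hx : x ∈ relSpan k A C B F) :
    rTensor A (mulLeft k c) (lTensor C (mulRight k a') x) ∈ relSpan k A C B F := by
  induction hx using Submodule.span_induction with
  | mem g hg =>
    obtain ⟨c0, b, a0, rfl⟩ := hg
    refine Submodule.subset_span ⟨c * c0, b, a0 * a', ?_⟩
    simp only [map_sub, rTensor_tmul, lTensor_tmul, mulLeft_apply, mulRight_apply]
    rw [mul_assoc ((b:A)) a0 a', mul_assoc c c0 (F b)]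
  | zero => simp
  | add u v _ _ hu hv => simpa [map_add] using add_mem hu hv
  | smul r u _ hu => simpa [map_smul] using Submodule.smul_mem _ r hu

lemma mkQ_LR_congr {B : Subalgebra k A} {F : B →ₐ[k] C} (c : C) (a' : A)
    {x y : C ⊗[k] A}
    (h : (relSpan k A C B F).mkQ x = (relSpan k A C B F).mkQ y) :
    (relSpan k A C B F).mkQ (rTensor A (mulLeft k c) (lTensor C (mulRight k a') x))
      = (relSpan k A C B F).mkQ (rTensor A (mulLeft k c) (lTensor C (mulRight k a') y)) := by
  rw [Submodule.mkQ_apply, Submodule.mkQ_apply, Submodule.Quotient.eq] at h ⊢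
  simpa only [map_sub] using LR_mem c a' h

lemma lT_one (z : C ⊗[k] A) : lTensor C (mulRight k (1:A)) z = z := by
  rw [LinearMap.mulRight_one, lTensor_id, LinearMap.id_apply]

lemma rT_one (z : C ⊗[k] A) : rTensor A (mulLeft k (1:C)) z = z := by
  rw [LinearMap.mulLeft_one, rTensor_id, LinearMap.id_apply]

lemma LRL_comp (c c2 : C) (a' : A) (z : C ⊗[k] A) :
    rTensor A (mulLeft k c) (lTensor C (mulRight k a') (rTensor A (mulLeft k c2) z))
      = rTensor A (mulLeft k (c * c2)) (lTensor C (mulRight k a') z) := by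
  induction z using TensorProduct.induction_on with
  | zero => simp
  | tmul x y => simp [mul_assoc]
  | add u v hu hv => simp only [map_add, hu, hv]

lemma LRR_comp (c : C) (a' a2 : A) (z : C ⊗[k] A) :
    rTensor A (mulLeft k c) (lTensor C (mulRight k a') (lTensor C (mulRight k a2) z))
      = rTensor A (mulLeft k c) (lTensor C (mulRight k (a2 * a')) z) := by
  induction z using TensorProduct.induction_on with
  | zero => simp
  | tmul x y => simp [mul_assoc]
  | add u v hu hv => simp only [map_add, hu, hv]

lemma mkQ_rel {B : Subalgebra k A} {F : B →ₐ[k] C} (c : C) (b : B) (a : A) :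
    (relSpan k A C B F).mkQ (c ⊗ₜ ((b : A) * a))
      = (relSpan k A C B F).mkQ ((c * F b) ⊗ₜ a) := by
  rw [Submodule.mkQ_apply, Submodule.mkQ_apply, Submodule.Quotient.eq]
  exact Submodule.subset_span ⟨c, b, a, rfl⟩

end Aux

set_option maxHeartbeats 1000000

open Paper in
/-- `m^ψ` descends to a well-defined multiplication on the push-forward
`C ⊗_B A` iff `\barψ = π_B ∘ ψ` is a `B`-bimodule morphism. -/
theorem twistMul_descends_iff_bimodule
    (k : Type*) [Field k] (A : Type*) [Ring A] [Algebra k A]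
    (C : Type*) [Ring C] [Algebra k C]
    (B : Subalgebra k A) (F : B →ₐ[k] C) (ψ : A ⊗[k] C →ₗ[k] C ⊗[k] A)
    (hψ : IsTwistingMap k A C ψ) :
    (∃ m : ((C ⊗[k] A) ⧸ relSpan k A C B F) →ₗ[k]
        ((C ⊗[k] A) ⧸ relSpan k A C B F) →ₗ[k] ((C ⊗[k] A) ⧸ relSpan k A C B F),
      ∀ x y : C ⊗[k] A,
        m ((relSpan k A C B F).mkQ x) ((relSpan k A C B F).mkQ y)
          = (relSpan k A C B F).mkQ (tmul k A C ψ x y))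
    ↔ ((∀ (b : B) (a : A) (c : C),
          (relSpan k A C B F).mkQ (ψ (((b : A) * a) ⊗ₜ c))
            = (relSpan k A C B F).mkQ (rTensor A (LinearMap.mulLeft k (F b)) (ψ (a ⊗ₜ c))))
        ∧ (∀ (b : B) (a : A) (c : C),
          (relSpan k A C B F).mkQ (ψ (a ⊗ₜ (c * F b)))
            = (relSpan k A C B F).mkQ
                (lTensor C (LinearMap.mulRight k (b : A)) (ψ (a ⊗ₜ c))))) := by
  set J := relSpan k A C B F with hJ
  set T : C ⊗[k] A →ₗ[k] C ⊗[k] A →ₗ[k] ((C ⊗[k] A) ⧸ J) :=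
    TensorProduct.curry (J.mkQ ∘ₗ tmulMap k A C ψ) with hT
  have hTxy : ∀ x y : C ⊗[k] A, T x y = J.mkQ (tmul k A C ψ x y) := fun x y => rfl
  constructor
  · rintro ⟨m, hm⟩
    constructor
    · intro b a c
      have e1 : ψ (((b : A) * a) ⊗ₜ c)
          = tmul k A C ψ ((1 : C) ⊗ₜ ((b : A) * a)) (c ⊗ₜ (1 : A)) := by
        rw [tmul_tmul_aux, lT_one, rT_one]
      rw [e1, ← hm, mkQ_rel, hm, tmul_tmul_aux, lT_one, one_mul]
    · intro b a c
      have e1 : ψ (a ⊗ₜ (c * F b))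
          = tmul k A C ψ ((1 : C) ⊗ₜ a) ((c * F b) ⊗ₜ (1 : A)) := by
        rw [tmul_tmul_aux, lT_one, rT_one]
      rw [e1, ← hm, ← mkQ_rel, hm, tmul_tmul_aux, rT_one, mul_one]
  · rintro ⟨h1, h2⟩
    have step1 : J ≤ LinearMap.ker T := by
      apply Submodule.span_le.mpr
      rintro g ⟨c, b, a, rfl⟩
      simp only [SetLike.mem_coe, LinearMap.mem_ker]
      apply TensorProduct.ext'
      intro c' a'
      rw [map_sub, LinearMap.sub_apply, hTxy, hTxy, tmul_tmul_aux, tmul_tmul_aux]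
      rw [mkQ_LR_congr c a' (h1 b a c'), LRL_comp, sub_self, LinearMap.zero_apply]
    set T1 : ((C ⊗[k] A) ⧸ J) →ₗ[k] C ⊗[k] A →ₗ[k] ((C ⊗[k] A) ⧸ J) :=
      J.liftQ T step1 with hT1
    have eT1 : T1 ∘ₗ J.mkQ = T := Submodule.liftQ_mkQ _ _ _
    have hT1x : ∀ (x : C ⊗[k] A) (y : C ⊗[k] A), T1 (J.mkQ x) y = T x y := by
      intro x y
      rw [show T1 (J.mkQ x) = (T1 ∘ₗ J.mkQ) x from rfl, eT1]
    have step2 : J ≤ LinearMap.ker T1.flip := by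
      apply Submodule.span_le.mpr
      rintro g ⟨c, b, a, rfl⟩
      simp only [SetLike.mem_coe, LinearMap.mem_ker]
      have hx : ∀ (c' : C) (a' : A), T (c' ⊗ₜ a') (c ⊗ₜ ((b : A) * a) - (c * F b) ⊗ₜ a) = 0 := by
        intro c' a'
        rw [map_sub, hTxy, hTxy, tmul_tmul_aux, tmul_tmul_aux]
        rw [mkQ_LR_congr c' a (h2 b a' c), LRR_comp, sub_self]
      apply LinearMap.ext
      intro q
      obtain ⟨x, rfl⟩ := J.mkQ_surjective q
      have hTf : T.flip (c ⊗ₜ ((b : A) * a) - (c * F b) ⊗ₜ a) = 0 := by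
        apply TensorProduct.ext'
        intro c' a'
        rw [LinearMap.flip_apply, LinearMap.zero_apply]
        exact hx c' a'
      rw [LinearMap.flip_apply, hT1x, LinearMap.zero_apply,
        ← LinearMap.flip_apply (f := T), hTf, LinearMap.zero_apply]
    refine ⟨(J.liftQ T1.flip step2).flip, ?_⟩
    intro x y
    have e : (J.liftQ T1.flip step2) ∘ₗ J.mkQ = T1.flip := Submodule.liftQ_mkQ _ _ _
    rw [LinearMap.flip_apply,
      show (J.liftQ T1.flip step2) (J.mkQ y) = ((J.liftQ T1.flip step2) ∘ₗ J.mkQ) y from rfl,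
      e, LinearMap.flip_apply, hT1x, hTxy]
end
end
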